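/- Let A be a commutative associative algebra over a field 𝔽 of characteristic 0 and let D be a nonzero Lie subalgebra of the Lie algebra Der A of derivations of A. If A is D-simple, then the Lie algebra W(A) = A·D = {u d : u ∈ A, d ∈ D} (with the commutator bracket) is a simple Lie algebra. -/

import Mathlib

/-!
In characteristic zero every derivation maps nilpotents to nilpotents, so the nilradical of a
`D`-simple algebra is `D`-stable and hence zero: `A` is reduced. Let `δ ≠ 0` lie in an ideal `I`
of `W`. The brackets `⁅δ, a • δ⁆ = δ a • δ` and `⁅u • δ, w • δ⁆ = (u * δ w - w * δ u) • δ`,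
together with halving, give `A • η ⊆ I` for `η = δ (δ a) • δ`, where `a` is chosen with
`δ (δ a) ≠ 0`. Then `b • W ⊆ I` for the nonzero element `b = η (δ a) = δ (δ a) ^ 2`. The
ideal `{b | b • W ⊆ I}` of `A` is `W`-stable since `d b • μ = ⁅d, b • μ⁆ - b • ⁅d, μ⁆`, so it
contains `1`, and `I = W`. Finally `⁅d, b • d⁆ = d b • d ≠ 0` whenever `d b ≠ 0`, so `W` is not
abelian.
-/

theorem IsAddTorsionFree.of_module_charZero (F M : Type*) [DivisionRing F] [CharZero F]
    [AddCommGroup M] [Module F M] : IsAddTorsionFree M :=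
  letI := Module.compHom M (algebraMap ℚ F)
  .of_module_rat M

namespace Derivation

variable {F A : Type*} [CommRing F] [CommRing A] [Algebra F A]

theorem lie_smul_right (μ ν : Derivation F A A) (u : A) :
    ⁅μ, u • ν⁆ = μ u • ν + u • ⁅μ, ν⁆ := by
  ext x
  simp only [commutator_apply, smul_apply, add_apply, smul_eq_mul, leibniz]
  ring

theorem lie_smul_smul (δ : Derivation F A A) (a b : A) :
    ⁅a • δ, b • δ⁆ = (a * δ b) • δ - (b * δ a) • δ := by
  ext x
  simp only [commutator_apply, smul_apply, sub_apply, smul_eq_mul, leibniz]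
  ring

theorem exists_lie_smul_self_ne_zero [IsReduced A] {d : Derivation F A A} (hd : d ≠ 0) :
    ∃ b : A, ⁅d, b • d⁆ ≠ 0 := by
  obtain ⟨b, hb⟩ : ∃ b, d b ≠ 0 := by
    by_contra! h
    exact hd (ext h)
  refine ⟨b, fun h => hb (eq_zero_of_pow_eq_zero (n := 2) ?_)⟩
  have hb' := congr($h b)
  rwa [lie_smul_right, lie_self, smul_zero, add_zero, smul_apply, smul_eq_mul, ← pow_two] at hb'

variable [IsAddTorsionFree A]

-- Differentiate and multiply by `d a`: one power of `a` is traded for two powers of `d a`.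
theorem pow_mul_pow_eq_zero_of_pow_succ_mul_pow_eq_zero (d : Derivation F A A) {a : A}
    {m j : ℕ} (h : a ^ (m + 1) * d a ^ (j + 1) = 0) : a ^ m * d a ^ (j + 3) = 0 := by
  have hd : (m + 1) • (a ^ m * d a ^ (j + 3)) + (j + 1) • (a ^ (m + 1) * d a ^ (j + 1) * d (d a))
      = d (a ^ (m + 1) * d a ^ (j + 1)) * d a := by
    simp only [leibniz, leibniz_pow, smul_eq_mul, nsmul_eq_mul, Nat.add_sub_cancel]
    ring
  rw [h, map_zero, zero_mul, zero_mul, smul_zero, add_zero, nsmul_eq_zero_iff] at hd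
  exact hd.resolve_right m.succ_ne_zero

theorem pow_add_two_mul_eq_zero (d : Derivation F A A) {a : A} :
    ∀ {m j : ℕ}, a ^ m * d a ^ (j + 1) = 0 → d a ^ (j + 1 + 2 * m) = 0
  | 0, _, h => by simpa using h
  | m + 1, j, h => by
    rw [show j + 1 + 2 * (m + 1) = j + 2 + 1 + 2 * m by ring]
    exact pow_add_two_mul_eq_zero d (pow_mul_pow_eq_zero_of_pow_succ_mul_pow_eq_zero d h)

theorem isNilpotent_apply (d : Derivation F A A) {a : A} (h : IsNilpotent a) :
    IsNilpotent (d a) := by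
  obtain ⟨n, hn⟩ := h
  exact ⟨_, pow_add_two_mul_eq_zero d (j := 0) (by rw [hn, zero_mul])⟩

theorem exists_apply_apply_ne_zero [IsReduced A] {δ : Derivation F A A} (hδ : δ ≠ 0) :
    ∃ a, δ (δ a) ≠ 0 := by
  by_contra! h
  refine hδ (ext fun x => eq_zero_of_pow_eq_zero (n := 2) ?_)
  have hx : 2 • δ x ^ 2 = δ (δ (x * x)) := by
    simp only [leibniz, map_add, smul_eq_mul, h x]
    ring
  rwa [h, nsmul_eq_zero_iff, or_iff_left two_ne_zero] at hx

end Derivation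

def IsDifferentiallySimple {R A : Type*} [CommRing R] [CommRing A] [Algebra R A]
    (S : Set (Derivation R A A)) : Prop :=
  ∀ I : Ideal A, (∀ d ∈ S, ∀ a ∈ I, d a ∈ I) → I = ⊥ ∨ I = ⊤

namespace IsDifferentiallySimple

variable {R A : Type*} [CommRing R] [CommRing A] [Algebra R A] {S T : Set (Derivation R A A)}

theorem mono (h : IsDifferentiallySimple S) (hST : S ⊆ T) : IsDifferentiallySimple T :=
  fun I hI => h I fun d hd => hI d (hST hd)

theorem isReduced [IsAddTorsionFree A] (h : IsDifferentiallySimple S) : IsReduced A := by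
  rcases h (nilradical A) fun d _ a ha => d.isNilpotent_apply ha with h | h
  · exact nilradical_eq_bot_iff.mp h
  · have : Subsingleton A := by
      obtain ⟨n, hn⟩ := (Ideal.eq_top_iff_one _).mp h
      exact subsingleton_of_zero_eq_one (by simpa using hn.symm)
    exact isReduced_of_subsingleton

end IsDifferentiallySimple

namespace LieSubalgebra

open Derivation

variable {F A : Type*} [Field F] [CommRing A] [Algebra F A]
  {W : LieSubalgebra F (Derivation F A A)} {K : Submodule F (Derivation F A A)}

theorem lie_mem_of_mem_left (hK : ∀ μ ∈ W, ∀ f ∈ K, ⁅μ, f⁆ ∈ K) {f μ : Derivation F A A}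
    (hf : f ∈ K) (hμ : μ ∈ W) : ⁅f, μ⁆ ∈ K := by
  rw [← lie_skew]
  exact K.neg_mem (hK μ hμ f hf)

section

variable (hW : ∀ (u : A), ∀ f ∈ W, u • f ∈ W) (hKW : K ≤ W.toSubmodule)
  (hK : ∀ μ ∈ W, ∀ f ∈ K, ⁅μ, f⁆ ∈ K)
include hW hKW hK

theorem apply_smul_self_mem {δ : Derivation F A A} (hδ : δ ∈ K) (a : A) : δ a • δ ∈ K := by
  have h : ⁅δ, a • δ⁆ = δ a • δ := by rw [lie_smul_right, lie_self, smul_zero, add_zero]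
  exact h ▸ lie_mem_of_mem_left hK hδ (hW a δ (hKW hδ))

theorem apply_smul_add_apply_smul_mem {η μ : Derivation F A A} (hη : η ∈ K) (hμ : μ ∈ K)
    (u : A) : η u • μ + μ u • η ∈ K := by
  have h : η u • μ + μ u • η = ⁅μ, u • η⁆ + ⁅η, u • μ⁆ := by
    rw [lie_smul_right, lie_smul_right, ← lie_skew μ η, smul_neg]
    abel
  exact h ▸ K.add_mem (lie_mem_of_mem_left hK hμ (hW u η (hKW hη)))
    (lie_mem_of_mem_left hK hη (hW u μ (hKW hμ)))

theorem mul_apply_smul_mem [NeZero (2 : F)] {δ : Derivation F A A} (hδ : δ ∈ K) {w : A}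
    (hw : w • δ ∈ K) (u : A) : (u * δ w) • δ ∈ K := by
  have hsym : δ u • (w • δ) + (w • δ) u • δ = (2 : F) • (w * δ u) • δ := by
    rw [two_smul, Derivation.smul_apply, smul_eq_mul, smul_smul, mul_comm (δ u) w]
  have hhalf := K.smul_mem (2 : F)⁻¹ (hsym ▸ apply_smul_add_apply_smul_mem hW hKW hK hδ hw u)
  rw [smul_smul, inv_mul_cancel₀ two_ne_zero, one_smul] at hhalf
  have h : (u * δ w) • δ = ⁅u • δ, w • δ⁆ + (w * δ u) • δ := by
    rw [lie_smul_smul, sub_add_cancel]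
  exact h ▸ K.add_mem (hK _ (hW u δ (hKW hδ)) _ hw) hhalf

theorem smul_apply_apply_smul_mem [NeZero (2 : F)] {δ : Derivation F A A} (hδ : δ ∈ K)
    (a u : A) : u • (δ (δ a) • δ) ∈ K := by
  rw [smul_smul]
  exact mul_apply_smul_mem hW hKW hK hδ (apply_smul_self_mem hW hKW hK hδ a) u

end

theorem apply_smul_mem_of_forall_smul_mem (hW : ∀ (u : A), ∀ f ∈ W, u • f ∈ W)
    (hK : ∀ μ ∈ W, ∀ f ∈ K, ⁅μ, f⁆ ∈ K) {ν : Derivation F A A} (hν : ∀ u : A, u • ν ∈ K)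
    (u : A) {μ : Derivation F A A} (hμ : μ ∈ W) : ν u • μ ∈ K := by
  have h : ν u • μ = ⁅ν, u • μ⁆ + ⁅μ, u • ν⁆ - μ u • ν := by
    rw [lie_smul_right, lie_smul_right, ← lie_skew μ ν, smul_neg]
    abel
  have hνK : ν ∈ K := one_smul A ν ▸ hν 1
  exact h ▸ K.sub_mem (K.add_mem (lie_mem_of_mem_left hK hνK (hW u μ hμ)) (hK μ hμ _ (hν u)))
    (hν (μ u))

theorem mem_of_smul_mem (hW : ∀ (u : A), ∀ f ∈ W, u • f ∈ W)
    (hK : ∀ μ ∈ W, ∀ f ∈ K, ⁅μ, f⁆ ∈ K)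
    (hsimple : IsDifferentiallySimple (W : Set (Derivation F A A))) {b : A} (hb : b ≠ 0)
    (hbK : ∀ μ ∈ W, b • μ ∈ K) {μ : Derivation F A A} (hμ : μ ∈ W) : μ ∈ K := by
  let J : Ideal A :=
    { carrier := {a | ∀ μ ∈ W, a • μ ∈ K}
      add_mem' := fun {a c} ha hc μ hμ => (add_smul a c μ).symm ▸ K.add_mem (ha μ hμ) (hc μ hμ)
      zero_mem' := fun μ _ => (zero_smul A μ).symm ▸ K.zero_mem
      smul_mem' := fun u a ha μ hμ => by
        rw [smul_eq_mul, mul_comm, mul_smul]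
        exact ha _ (hW u μ hμ) }
  have hJ : ∀ d ∈ (W : Set (Derivation F A A)), ∀ a ∈ J, d a ∈ J := by
    intro d hd a ha μ hμ
    have h : d a • μ = ⁅d, a • μ⁆ - a • ⁅d, μ⁆ := by rw [lie_smul_right]; abel
    exact h ▸ K.sub_mem (hK d hd _ (ha μ hμ)) (ha _ (W.lie_mem hd hμ))
  rcases hsimple J hJ with h | h
  · exact absurd ((Submodule.mem_bot A).mp (h ▸ hbK : b ∈ (⊥ : Ideal A))) hb
  · exact one_smul A μ ▸ (h ▸ Submodule.mem_top : (1 : A) ∈ J) μ hμ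

theorem mem_of_mem_of_ne_zero [CharZero F] (hW : ∀ (u : A), ∀ f ∈ W, u • f ∈ W)
    (hKW : K ≤ W.toSubmodule) (hK : ∀ μ ∈ W, ∀ f ∈ K, ⁅μ, f⁆ ∈ K)
    (hsimple : IsDifferentiallySimple (W : Set (Derivation F A A))) {δ : Derivation F A A}
    (hδK : δ ∈ K) (hδ : δ ≠ 0) {μ : Derivation F A A} (hμ : μ ∈ W) : μ ∈ K := by
  have := IsAddTorsionFree.of_module_charZero F A
  have := hsimple.isReduced
  obtain ⟨a, ha⟩ := exists_apply_apply_ne_zero hδ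
  have hsq : (δ (δ a) • δ) (δ a) = δ (δ a) ^ 2 := by rw [Derivation.smul_apply, smul_eq_mul, sq]
  refine mem_of_smul_mem hW hK hsimple (pow_ne_zero 2 ha) (fun μ hμ => ?_) hμ
  exact hsq ▸ apply_smul_mem_of_forall_smul_mem hW hK
    (smul_apply_apply_smul_mem hW hKW hK hδK a) (δ a) hμ

theorem isSimple_of_isDifferentiallySimple [CharZero F] (hW : ∀ (u : A), ∀ f ∈ W, u • f ∈ W)
    (hW0 : W ≠ ⊥) (hsimple : IsDifferentiallySimple (W : Set (Derivation F A A))) :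
    LieAlgebra.IsSimple F W := by
  have := IsAddTorsionFree.of_module_charZero F A
  have := hsimple.isReduced
  refine ⟨fun I => or_iff_not_imp_left.mpr fun hI => ?_, fun habel => ?_⟩
  · obtain ⟨x, hxI, hx⟩ :=
      (Submodule.ne_bot_iff _).mp (mt (LieSubmodule.toSubmodule_eq_bot I).mp hI)
    let K := (LieSubmodule.toSubmodule I).map W.incl.toLinearMap
    have hKW : K ≤ W.toSubmodule := by
      rintro _ ⟨y, -, rfl⟩
      exact y.2
    have hK : ∀ μ ∈ W, ∀ f ∈ K, ⁅μ, f⁆ ∈ K := by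
      rintro μ hμ _ ⟨y, hy, rfl⟩
      exact ⟨⁅⟨μ, hμ⟩, y⁆, I.lie_mem hy, rfl⟩
    refine eq_top_iff.mpr fun y _ => ?_
    obtain ⟨z, hz, hzy⟩ := mem_of_mem_of_ne_zero hW hKW hK hsimple ⟨x, hxI, rfl⟩
      (fun h => hx (Subtype.ext h)) y.2
    exact Subtype.ext hzy ▸ hz
  · obtain ⟨d, hdW, hd⟩ := (Submodule.ne_bot_iff _).mp (mt W.toSubmodule_eq_bot.mp hW0)
    obtain ⟨b, hb⟩ := exists_lie_smul_self_ne_zero hd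
    exact hb congr(($(habel.trivial ⟨d, hdW⟩ ⟨b • d, hW b d hdW⟩) : Derivation F A A))

end LieSubalgebra

theorem jordan_simple_witt
    (F A : Type*) [Field F] [CharZero F] [CommRing A] [Algebra F A]
    (D : LieSubalgebra F (Derivation F A A)) (hD : D ≠ ⊥)
    -- `A` is `D`-simple: no subspace `I ≠ ⊥, ⊤` with `A·I ⊆ I` and `D(I) ⊆ I`
    (hDsimple : ¬ ∃ I : Submodule F A, I ≠ ⊥ ∧ I ≠ ⊤ ∧
      (∀ u : A, ∀ a ∈ I, u * a ∈ I) ∧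
      (∀ d ∈ D, ∀ a ∈ I, (d : Derivation F A A) a ∈ I))
    -- `W(A) = A·D`, a Lie subalgebra of `Der A`
    (W : LieSubalgebra F (Derivation F A A))
    (hW : W.toSubmodule =
      Submodule.span F {f : Derivation F A A | ∃ (u : A) (d : Derivation F A A), d ∈ D ∧ f = u • d}) :
    LieAlgebra.IsSimple F W := by
  have hDW : ∀ d ∈ D, d ∈ W := fun d hd => (LieSubalgebra.mem_toSubmodule W).mp
    (hW ▸ Submodule.subset_span ⟨1, d, hd, (one_smul A d).symm⟩)
  have hsmul : ∀ (u : A), ∀ f ∈ W, u • f ∈ W := by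
    intro u f hf
    rw [← LieSubalgebra.mem_toSubmodule, hW] at hf ⊢
    refine (Submodule.span_le (p := (Submodule.span F _).comap
      (DistribSMul.toLinearMap F (Derivation F A A) u))).mpr ?_ hf
    rintro _ ⟨v, d, hd, rfl⟩
    exact Submodule.subset_span ⟨u * v, d, hd, (mul_smul u v d).symm⟩
  have hsimple : IsDifferentiallySimple (D : Set (Derivation F A A)) := by
    intro I hI
    by_contra! h
    exact hDsimple ⟨I.restrictScalars F, mt (Submodule.restrictScalars_eq_bot_iff F A A).mp h.1,
      mt (Submodule.restrictScalars_eq_top_iff F A A).mp h.2, fun u a ha => I.mul_mem_left u ha, hI⟩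
  refine LieSubalgebra.isSimple_of_isDifferentiallySimple hsmul ?_ (hsimple.mono hDW)
  rintro rfl
  exact hD (eq_bot_iff.mpr hDW)
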